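/- arXiv:2407.10849 — 7 statements merged into one kernel-verified Lean document; each statement's English description precedes it below -/
import Mathlib

section
/- Let p > 2. There exists a constant C > 0, depending only on p, such that for all real numbers x and y one has | |x+y|^{p-2}(x+y) − |x|^{p-2}x − (p−1)|x|^{p-2}y | ≤ C·( 1_{p>3}·|x|^{p−3}y² + |y|^{p−1} ), where the term 1_{p>3}·|x|^{p−3}y² is present only when p > 3. -/
/-!
The map `φ t = |t| ^ (p - 2) * t` is differentiable with `φ' t = (p - 1) * |t| ^ (p - 2)`
(also at `0`, since `p > 2`), so by the mean value theorem applied to `φ t - φ' x * t` the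
remainder is at most `|y|` times the oscillation of `φ'` between `x` and `x + y`. For `p ≤ 3`
the map `s ↦ s ^ (p - 2)` is `(p - 2)`-Hölder on `[0, ∞)`, which gives `(p - 1) |y| ^ (p - 1)`.
For `p > 3` it is Lipschitz on `[0, |x| + |y|]` with constant `(p - 2) (|x| + |y|) ^ (p - 3)`,
and `(|x| + |y|) ^ (p - 3) ≤ 2 ^ (p - 3) (|x| ^ (p - 3) + |y| ^ (p - 3))` splits the bound
into the two terms.
-/
open Real Set Filter Asymptotics Topology

lemma Real.add_rpow_le_two_rpow_mul_rpow_add_rpow {a b s : ℝ} (ha : 0 ≤ a) (hb : 0 ≤ b)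
    (hs : 0 ≤ s) : (a + b) ^ s ≤ 2 ^ s * (a ^ s + b ^ s) := calc
  (a + b) ^ s ≤ (2 * max a b) ^ s := by
    gcongr
    rw [two_mul]
    exact add_le_add (le_max_left a b) (le_max_right a b)
  _ = 2 ^ s * max (a ^ s) (b ^ s) := by
    rw [mul_rpow zero_le_two (le_max_of_le_left ha), rpow_max ha hb hs]
  _ ≤ 2 ^ s * (a ^ s + b ^ s) := by
    gcongr
    exact max_le_add_of_nonneg (rpow_nonneg ha s) (rpow_nonneg hb s)

lemma Real.abs_rpow_sub_rpow_le_abs_sub_rpow {a b q : ℝ} (ha : 0 ≤ a) (hb : 0 ≤ b) (hq : 0 ≤ q)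
    (hq1 : q ≤ 1) : |a ^ q - b ^ q| ≤ |a - b| ^ q := by
  wlog hab : b ≤ a generalizing a b
  · rw [abs_sub_comm, abs_sub_comm a b]
    exact this hb ha (le_of_not_ge hab)
  have := rpow_add_le_add_rpow (sub_nonneg.2 hab) hb hq hq1
  rw [sub_add_cancel] at this
  rw [abs_of_nonneg (sub_nonneg.2 (rpow_le_rpow hb hab hq)), abs_of_nonneg (sub_nonneg.2 hab)]
  linarith

lemma Real.abs_rpow_sub_rpow_le_mul_abs_sub {a b M q : ℝ} (ha : 0 ≤ a) (hb : 0 ≤ b)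
    (haM : a ≤ M) (hbM : b ≤ M) (hq : 1 ≤ q) :
    |a ^ q - b ^ q| ≤ q * M ^ (q - 1) * |a - b| := by
  have hderiv : ∀ t ∈ Icc 0 M, HasDerivWithinAt (· ^ q) (q * t ^ (q - 1)) (Icc 0 M) t :=
    fun t _ => (hasDerivAt_rpow_const (Or.inr hq)).hasDerivWithinAt
  have hbound : ∀ t ∈ Icc 0 M, ‖q * t ^ (q - 1)‖ ≤ q * M ^ (q - 1) := by
    rintro t ⟨ht0, htM⟩
    have : 0 ≤ q - 1 := sub_nonneg.2 hq
    rw [norm_of_nonneg (by positivity)]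
    gcongr
  simpa only [norm_eq_abs] using (convex_Icc 0 M).norm_image_sub_le_of_norm_hasDerivWithin_le
    hderiv hbound ⟨hb, hbM⟩ ⟨ha, haM⟩

lemma hasDerivAt_abs_rpow_mul_self {r : ℝ} (hr : 0 < r) (t : ℝ) :
    HasDerivAt (fun s => |s| ^ r * s) ((r + 1) * |t| ^ r) t := by
  rcases eq_or_ne t 0 with rfl | ht
  · have hlim : Tendsto (fun s : ℝ => |s| ^ r) (𝓝 0) (𝓝 0) := by
      simpa [zero_rpow hr.ne'] using
        (continuous_abs.rpow_const fun _ => Or.inr hr.le).tendsto (0 : ℝ)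
    rw [hasDerivAt_iff_isLittleO]
    simpa [zero_rpow hr.ne'] using
      ((isLittleO_one_iff ℝ).2 hlim).mul_isBigO (isBigO_refl (fun s : ℝ => s) _)
  · refine (((hasDerivAt_abs ht).rpow_const (p := r) (Or.inl (abs_ne_zero.2 ht))).mul
      (hasDerivAt_id' t)).congr_deriv ?_
    have h : |t| ^ (r - 1) * |t| = |t| ^ r := by
      rw [← rpow_add_one (abs_ne_zero.2 ht), sub_add_cancel]
    rw [← h, ← sign_mul_self t]
    ring

lemma abs_sub_sub_mul_le_of_hasDerivAt {f f' : ℝ → ℝ} {x y C : ℝ}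
    (hf : ∀ t ∈ uIcc x (x + y), HasDerivAt f (f' t) t)
    (hC : ∀ t ∈ uIcc x (x + y), |f' t - f' x| ≤ C) :
    |f (x + y) - f x - f' x * y| ≤ C * |y| := by
  have hg : ∀ t ∈ uIcc x (x + y),
      HasDerivWithinAt (fun s => f s - f' x * s) (f' t - f' x) (uIcc x (x + y)) t := fun t ht =>
    ((hf t ht).sub ((hasDerivAt_id' t).const_mul (f' x))).hasDerivWithinAt.congr_deriv (by ring)
  have := (convex_uIcc x (x + y)).norm_image_sub_le_of_norm_hasDerivWithin_le hg hC
    left_mem_uIcc right_mem_uIcc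
  simp only [norm_eq_abs, add_sub_cancel_left] at this
  convert this using 2
  ring

lemma abs_abs_rpow_sub_abs_rpow_le_of_le_one {a b d q : ℝ} (hd : |a - b| ≤ d) (hq : 0 ≤ q)
    (hq1 : q ≤ 1) : |(|a| ^ q - |b| ^ q)| ≤ d ^ q :=
  (abs_rpow_sub_rpow_le_abs_sub_rpow (abs_nonneg a) (abs_nonneg b) hq hq1).trans
    (rpow_le_rpow (abs_nonneg _) ((abs_abs_sub_abs_le_abs_sub a b).trans hd) hq)

lemma abs_abs_rpow_sub_abs_rpow_le_of_one_le {a b d q : ℝ} (hd : |a - b| ≤ d) (hq : 1 ≤ q) :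
    |(|a| ^ q - |b| ^ q)| ≤ q * 2 ^ (q - 1) * (|b| ^ (q - 1) + d ^ (q - 1)) * d := by
  have hd0 : 0 ≤ d := (abs_nonneg _).trans hd
  have hab : |(|a| - |b|)| ≤ d := (abs_abs_sub_abs_le_abs_sub a b).trans hd
  have haM : |a| ≤ |b| + d := by linarith [(abs_le.1 hab).2]
  calc _ ≤ q * (|b| + d) ^ (q - 1) * |(|a| - |b|)| :=
        abs_rpow_sub_rpow_le_mul_abs_sub (abs_nonneg a) (abs_nonneg b) haM
          (le_add_of_nonneg_right hd0) hq
    _ ≤ q * (2 ^ (q - 1) * (|b| ^ (q - 1) + d ^ (q - 1))) * d := by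
        have := sub_nonneg.2 hq
        gcongr
        exact add_rpow_le_two_rpow_mul_rpow_add_rpow (abs_nonneg b) hd0 this
    _ = _ := by ring

lemma abs_abs_rpow_mul_self_remainder_le {p x y C : ℝ} (hp : 2 < p)
    (hC : ∀ t, |t - x| ≤ |y| → (p - 1) * |(|t| ^ (p - 2) - |x| ^ (p - 2))| ≤ C) :
    |(|x + y| ^ (p - 2) * (x + y) - |x| ^ (p - 2) * x - (p - 1) * |x| ^ (p - 2) * y)|
      ≤ C * |y| := by
  have hderiv (t : ℝ) :
      HasDerivAt (fun s => |s| ^ (p - 2) * s) ((p - 1) * |t| ^ (p - 2)) t := by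
    convert hasDerivAt_abs_rpow_mul_self (sub_pos.2 hp) t using 2
    ring
  refine abs_sub_sub_mul_le_of_hasDerivAt (fun t _ => hderiv t) fun t ht => ?_
  rw [← mul_sub, abs_mul, abs_of_pos (by linarith : 0 < p - 1)]
  exact hC t (by simpa using abs_sub_left_of_mem_uIcc ht)

/-- First elementary inequality of Lemma 2.1: for `p > 2` there is a constant
`C > 0` depending only on `p` such that for all real `x, y`,
`| |x+y|^(p-2) (x+y) - |x|^(p-2) x - (p-1) |x|^(p-2) y |
  ≤ C (1_{p>3} |x|^(p-3) y² + |y|^(p-1))`. -/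
theorem stmt_0 (p : ℝ) (hp : 2 < p) :
    ∃ C : ℝ, 0 < C ∧ ∀ x y : ℝ,
      |(|x + y| ^ (p - 2) * (x + y) - |x| ^ (p - 2) * x - (p - 1) * |x| ^ (p - 2) * y)|
        ≤ C * ((if 3 < p then |x| ^ (p - 3) * y ^ 2 else 0) + |y| ^ (p - 1)) := by
  have hp1 : 0 < p - 1 := by linarith
  by_cases h3 : 3 < p
  · refine ⟨(p - 1) * ((p - 2) * 2 ^ (p - 3)), by positivity, fun x y => ?_⟩
    rw [if_pos h3]
    calc _ ≤ (p - 1) * ((p - 2) * 2 ^ (p - 3) * (|x| ^ (p - 3) + |y| ^ (p - 3)) * |y|) * |y| := by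
          refine abs_abs_rpow_mul_self_remainder_le hp fun t ht => ?_
          have := abs_abs_rpow_sub_abs_rpow_le_of_one_le ht (by linarith : 1 ≤ p - 2)
          rw [show p - 2 - 1 = p - 3 by ring] at this
          gcongr
      _ = (p - 1) * ((p - 2) * 2 ^ (p - 3)) * (|x| ^ (p - 3) * y ^ 2 + |y| ^ (p - 1)) := by
          have : |y| ^ (p - 3) * |y| * |y| = |y| ^ (p - 1) := by
            rw [← rpow_add_one' (abs_nonneg y) (by linarith),
              ← rpow_add_one' (abs_nonneg y) (by linarith)]
            ring_nf
          rw [← this, ← sq_abs y]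
          ring
  · refine ⟨p - 1, hp1, fun x y => ?_⟩
    rw [if_neg h3, zero_add]
    calc _ ≤ (p - 1) * |y| ^ (p - 2) * |y| :=
          abs_abs_rpow_mul_self_remainder_le hp fun t ht => by
            gcongr
            exact abs_abs_rpow_sub_abs_rpow_le_of_le_one ht (by linarith) (by linarith)
      _ = (p - 1) * |y| ^ (p - 1) := by
          rw [mul_assoc, ← rpow_add_one' (abs_nonneg y) (by linarith)]
          ring_nf
end

section
/- Let 2 < p < 3. There exists a constant C > 0, depending only on p, such that for all real numbers x and y one has | |x+y|^{p-2} − |x|^{p-2} |·|x| ≤ C·|xy|^{(p−1)/2}. -/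
private lemma rpow_subadd {a b α : ℝ} (ha : 0 ≤ a) (hb : 0 ≤ b) (h0 : 0 ≤ α) (h1 : α ≤ 1) :
    (a + b) ^ α ≤ a ^ α + b ^ α := by
  have h := NNReal.rpow_add_le_add_rpow a.toNNReal b.toNNReal h0 h1
  have hcast : ((a.toNNReal + b.toNNReal : NNReal) : ℝ) = a + b := by
    simp [Real.coe_toNNReal _ ha, Real.coe_toNNReal _ hb]
  calc (a + b) ^ α = (((a.toNNReal + b.toNNReal : NNReal) : ℝ)) ^ α := by rw [hcast]
    _ = (((a.toNNReal + b.toNNReal) ^ α : NNReal) : ℝ) := by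
        rw [← NNReal.coe_rpow]
    _ ≤ ((a.toNNReal ^ α + b.toNNReal ^ α : NNReal) : ℝ) := by exact_mod_cast h
    _ = a ^ α + b ^ α := by
        rw [NNReal.coe_add, NNReal.coe_rpow, NNReal.coe_rpow,
          Real.coe_toNNReal _ ha, Real.coe_toNNReal _ hb]

private lemma abs_rpow_sub_le {a b α : ℝ} (ha : 0 ≤ a) (hb : 0 ≤ b) (h0 : 0 ≤ α) (h1 : α ≤ 1) :
    |a ^ α - b ^ α| ≤ |a - b| ^ α := by
  rcases le_total b a with h | h
  · rw [abs_of_nonneg (sub_nonneg.2 (Real.rpow_le_rpow hb h h0)),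
      abs_of_nonneg (sub_nonneg.2 h)]
    have := rpow_subadd (sub_nonneg.2 h) hb h0 h1
    rw [sub_add_cancel] at this
    linarith
  · rw [abs_sub_comm, abs_sub_comm a b]
    rw [abs_of_nonneg (sub_nonneg.2 (Real.rpow_le_rpow ha h h0)),
      abs_of_nonneg (sub_nonneg.2 h)]
    have := rpow_subadd (sub_nonneg.2 h) ha h0 h1
    rw [sub_add_cancel] at this
    linarith

private lemma abs_rpow_sub_le' {a b α : ℝ} (ha : 0 ≤ a) (hb : 0 < b) (h0 : 0 < α) (h1 : α ≤ 1) :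
    |a ^ α - b ^ α| ≤ b ^ (α - 1) * |a - b| := by
  have hbpow : b ^ α = b ^ (α - 1) * b := by
    rw [← Real.rpow_add_one hb.ne']; ring_nf
  have hbpos : 0 < b ^ (α - 1) := Real.rpow_pos_of_pos hb _
  rcases le_total b a with h | h
  · have hapos : 0 < a := lt_of_lt_of_le hb h
    rw [abs_of_nonneg (sub_nonneg.2 (Real.rpow_le_rpow hb.le h h0.le)),
      abs_of_nonneg (sub_nonneg.2 h)]
    have hapow : a ^ α = a ^ (α - 1) * a := by
      rw [← Real.rpow_add_one hapos.ne']; ring_nf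
    have hmono : a ^ (α - 1) ≤ b ^ (α - 1) :=
      Real.rpow_le_rpow_of_nonpos hb h (by linarith)
    nlinarith [hapos.le]
  · rw [abs_sub_comm, abs_sub_comm a b,
      abs_of_nonneg (sub_nonneg.2 (Real.rpow_le_rpow ha h h0.le)),
      abs_of_nonneg (sub_nonneg.2 h)]
    rcases eq_or_lt_of_le ha with rfl | hapos
    · rw [Real.zero_rpow h0.ne']
      nlinarith
    · have hmono : b ^ (α - 1) ≤ a ^ (α - 1) :=
        Real.rpow_le_rpow_of_nonpos hapos h (by linarith)
      have hapow : a ^ α = a ^ (α - 1) * a := by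
        rw [← Real.rpow_add_one hapos.ne']; ring_nf
      nlinarith [hapos.le]

/-- Second elementary inequality of Lemma 2.1 for `2 < p < 3`: there is a
constant `C > 0` depending only on `p` such that for all real `x, y`,
`| |x+y|^(p-2) - |x|^(p-2) | · |x| ≤ C |x y|^((p-1)/2)`. -/
theorem stmt_2 (p : ℝ) (hp : 2 < p) (hp' : p < 3) :
    ∃ C : ℝ, 0 < C ∧ ∀ x y : ℝ,
      |(|x + y| ^ (p - 2) - |x| ^ (p - 2))| * |x| ≤ C * |x * y| ^ ((p - 1) / 2) := by
  refine ⟨2, by norm_num, fun x y => ?_⟩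
  set α := p - 2 with hαdef
  set β := (p - 1) / 2 with hβdef
  have hα0 : 0 < α := by simp [hαdef]; linarith
  have hα1 : α ≤ 1 := by simp [hαdef]; linarith
  have hβ0 : 0 < β := by simp [hβdef]; linarith
  have hβ1 : β < 1 := by simp [hβdef]; linarith
  have hexp : α + (1 - β) = β := by simp [hαdef, hβdef]; ring
  by_cases hx0 : x = 0
  · subst hx0; simp; positivity
  by_cases hy0 : y = 0
  · subst hy0; simp; positivity
  have hA : (0:ℝ) < |x| := abs_pos.2 hx0
  have hB : (0:ℝ) < |y| := abs_pos.2 hy0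
  have hS : (0:ℝ) ≤ |x + y| := abs_nonneg _
  have htri : |(|x + y| - |x|)| ≤ |y| := by
    have := abs_abs_sub_abs_le_abs_sub (x + y) x
    simpa using this
  have hRHS : |x * y| ^ β = |x| ^ β * |y| ^ β := by
    rw [abs_mul, Real.mul_rpow hA.le hB.le]
  rw [hRHS]
  rcases le_total (|x|) (2 * |y|) with hc | hc
  -- Case |x| ≤ 2|y|
  · have h1 : |(|x + y| ^ α - |x| ^ α)| ≤ |y| ^ α :=
      (abs_rpow_sub_le hS hA.le hα0.le hα1).trans
        (Real.rpow_le_rpow (abs_nonneg _) htri hα0.le)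
    have h2 : |(|x + y| ^ α - |x| ^ α)| * |x| ≤ |y| ^ α * |x| :=
      mul_le_mul_of_nonneg_right h1 hA.le
    refine h2.trans ?_
    have hAsplit : |x| = |x| ^ β * |x| ^ (1 - β) := by
      rw [← Real.rpow_add hA, add_sub_cancel, Real.rpow_one]
    have h3 : |x| ^ (1 - β) ≤ 2 * |y| ^ (1 - β) := by
      calc |x| ^ (1 - β) ≤ (2 * |y|) ^ (1 - β) :=
            Real.rpow_le_rpow hA.le hc (by linarith)
        _ = 2 ^ (1 - β) * |y| ^ (1 - β) := Real.mul_rpow (by norm_num) hB.le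
        _ ≤ 2 * |y| ^ (1 - β) := by
            have : (2:ℝ) ^ (1 - β) ≤ 2 ^ (1:ℝ) :=
              Real.rpow_le_rpow_of_exponent_le (by norm_num) (by linarith)
            rw [Real.rpow_one] at this
            exact mul_le_mul_of_nonneg_right this (Real.rpow_nonneg hB.le _)
    have hBsplit : |y| ^ α * |y| ^ (1 - β) = |y| ^ β := by
      rw [← Real.rpow_add hB, hexp]
    calc |y| ^ α * |x| = |y| ^ α * (|x| ^ β * |x| ^ (1 - β)) := by rw [← hAsplit]
      _ ≤ |y| ^ α * (|x| ^ β * (2 * |y| ^ (1 - β))) := by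
          refine mul_le_mul_of_nonneg_left ?_ (Real.rpow_nonneg hB.le _)
          exact mul_le_mul_of_nonneg_left h3 (Real.rpow_nonneg hA.le _)
      _ = 2 * (|x| ^ β * (|y| ^ α * |y| ^ (1 - β))) := by ring
      _ = 2 * (|x| ^ β * |y| ^ β) := by rw [hBsplit]
  -- Case 2|y| ≤ |x|
  · have h1 : |(|x + y| ^ α - |x| ^ α)| ≤ |x| ^ (α - 1) * |y| :=
      (abs_rpow_sub_le' hS hA hα0 hα1).trans
        (mul_le_mul_of_nonneg_left htri (Real.rpow_nonneg hA.le _))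
    have h2 : |(|x + y| ^ α - |x| ^ α)| * |x| ≤ |x| ^ α * |y| := by
      have := mul_le_mul_of_nonneg_right h1 hA.le
      refine this.trans (le_of_eq ?_)
      rw [mul_right_comm, ← Real.rpow_add_one hA.ne']
      ring_nf
    refine h2.trans ?_
    have hBA : |y| ≤ |x| := by linarith
    have hBsplit : |y| = |y| ^ β * |y| ^ (1 - β) := by
      rw [← Real.rpow_add hB, add_sub_cancel, Real.rpow_one]
    have h3 : |y| ^ (1 - β) ≤ |x| ^ (1 - β) :=
      Real.rpow_le_rpow hB.le hBA (by linarith)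
    have hAsplit : |x| ^ α * |x| ^ (1 - β) = |x| ^ β := by
      rw [← Real.rpow_add hA, hexp]
    calc |x| ^ α * |y| = |x| ^ α * (|y| ^ β * |y| ^ (1 - β)) := by rw [← hBsplit]
      _ ≤ |x| ^ α * (|y| ^ β * |x| ^ (1 - β)) := by
          refine mul_le_mul_of_nonneg_left ?_ (Real.rpow_nonneg hA.le _)
          exact mul_le_mul_of_nonneg_left h3 (Real.rpow_nonneg hB.le _)
      _ = |x| ^ α * |x| ^ (1 - β) * |y| ^ β := by ring
      _ = |x| ^ β * |y| ^ β := by rw [hAsplit]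
      _ ≤ 2 * (|x| ^ β * |y| ^ β) := by
          nlinarith [Real.rpow_nonneg hA.le β, Real.rpow_nonneg hB.le β,
            mul_nonneg (Real.rpow_nonneg hA.le β) (Real.rpow_nonneg hB.le β)]
end

section
/- Let n ≥ 2 be an integer, let p > 2 with p < 2n/(n−2) when n ≥ 3, and let Λ = 4(n−1)/(p²−4) (the Felli–Schneider condition). Set α := ((p−2)/2)·√Λ, β := (pΛ/2)^{1/(p−2)} and V_0(s) := β·(cosh(αs))^{−2/(p−2)}. Then the function m(s) := V_0(s)^{p/2} satisfies the linear ordinary differential equation −m''(s) + (n−1+Λ)·m(s) = (p−1)·V_0(s)^{p−2}·m(s) for all s ∈ ℝ. -/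
/-- Under the Felli–Schneider condition (`n ≥ 2`, `2 < p`, `p < 2n/(n-2)` when
`n ≥ 3`, and `Λ = 4(n-1)/(p²-4)`), the function `m = V₀^(p/2)` satisfies
`-m'' + (n-1+Λ) m = (p-1) V₀^(p-2) m` on `ℝ`, where
`V₀(s) = β (cosh(αs))^(-2/(p-2))`. -/
theorem stmt_5 (n : ℕ) (p Λ α β : ℝ) (hn : 2 ≤ n) (hp : 2 < p)
    (hpc : 3 ≤ n → p < 2 * n / (n - 2)) (hΛ : Λ = 4 * (n - 1) / (p ^ 2 - 4))
    (hα : α = (p - 2) / 2 * Real.sqrt Λ) (hβ : β = (p * Λ / 2) ^ ((1 : ℝ) / (p - 2)))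
    (V₀ m : ℝ → ℝ) (hV : ∀ s, V₀ s = β * Real.cosh (α * s) ^ (-2 / (p - 2) : ℝ))
    (hm : ∀ s, m s = V₀ s ^ (p / 2)) :
    ∀ s, -deriv (deriv m) s + (n - 1 + Λ) * m s = (p - 1) * V₀ s ^ (p - 2) * m s := by
  have hp2 : (0:ℝ) < p - 2 := by linarith
  have hn1 : (1:ℝ) ≤ (n : ℝ) - 1 := by
    have : (2:ℝ) ≤ (n:ℝ) := by exact_mod_cast hn
    linarith
  have hp24 : (0:ℝ) < p ^ 2 - 4 := by nlinarith
  have hΛpos : 0 < Λ := by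
    rw [hΛ]; exact div_pos (by linarith) hp24
  have hq : 0 < p * Λ / 2 := by positivity
  have hβpos : 0 < β := by rw [hβ]; exact Real.rpow_pos_of_pos hq _
  have hcosh : ∀ s : ℝ, 0 < Real.cosh (α * s) := fun s => Real.cosh_pos _
  set k : ℝ := -p / (p - 2) with hk
  set c : ℝ := β ^ (p / 2) with hc
  -- rewrite m
  have hm' : m = fun s => c * Real.cosh (α * s) ^ k := by
    funext s
    rw [hm, hV, Real.mul_rpow hβpos.le (Real.rpow_nonneg (hcosh s).le _),
      ← Real.rpow_mul (hcosh s).le]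
    have he : -2 / (p - 2) * (p / 2) = k := by
      rw [hk]; field_simp
    rw [he]
  -- derivative facts
  have hlin : ∀ s : ℝ, HasDerivAt (fun s : ℝ => α * s) α s := fun s => by
    simpa using (hasDerivAt_id s).const_mul α
  have hch : ∀ s : ℝ, HasDerivAt (fun s => Real.cosh (α * s)) (Real.sinh (α * s) * α) s :=
    fun s => (Real.hasDerivAt_cosh _).comp s (hlin s)
  have hsh : ∀ s : ℝ, HasDerivAt (fun s => Real.sinh (α * s)) (Real.cosh (α * s) * α) s :=
    fun s => (Real.hasDerivAt_sinh _).comp s (hlin s)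
  have key : ∀ (r : ℝ) (s : ℝ), HasDerivAt (fun s => Real.cosh (α * s) ^ r)
      (Real.sinh (α * s) * α * r * Real.cosh (α * s) ^ (r - 1)) s := fun r s =>
    (hch s).rpow_const (Or.inl (hcosh s).ne')
  have hd1 : ∀ s, HasDerivAt m
      (c * (Real.sinh (α * s) * α * k * Real.cosh (α * s) ^ (k - 1))) s := fun s => by
    rw [hm']; exact (key k s).const_mul c
  have hdm : deriv m = fun s =>
      (c * k * α) * (Real.cosh (α * s) ^ (k - 1) * Real.sinh (α * s)) := by
    funext s
    rw [(hd1 s).deriv]; ring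
  have hd2 : ∀ s, HasDerivAt (deriv m)
      ((c * k * α) * (Real.sinh (α * s) * α * (k - 1) * Real.cosh (α * s) ^ (k - 1 - 1) *
        Real.sinh (α * s) + Real.cosh (α * s) ^ (k - 1) * (Real.cosh (α * s) * α))) s := by
    intro s
    rw [hdm]
    exact ((key (k - 1) s).mul (hsh s)).const_mul (c * k * α)
  intro s
  set X := Real.cosh (α * s) with hXdef
  set S := Real.sinh (α * s) with hSdef
  have hX : 0 < X := hcosh s
  have hSX : S ^ 2 = X ^ 2 - 1 := Real.sinh_sq _
  set A : ℝ := X ^ (k - 2) with hA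
  have hA1 : X ^ (k - 1) = A * X := by
    rw [hA, show k - 1 = k - 2 + 1 by ring, Real.rpow_add hX, Real.rpow_one]
  have h2' : X ^ (2:ℝ) = X ^ (2:ℕ) := by
    rw [← Real.rpow_natCast X 2]; norm_num
  have hA0 : X ^ k = A * X ^ 2 := by
    rw [hA, ← h2', ← Real.rpow_add hX]
    congr 1
    ring
  have hA2 : X ^ (k - 1 - 1) = A := by rw [hA, show k - 1 - 1 = k - 2 by ring]
  -- value of V₀^(p-2)
  have hVp : V₀ s ^ (p - 2) * X ^ 2 = p * Λ / 2 := by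
    rw [hV, Real.mul_rpow hβpos.le (Real.rpow_nonneg hX.le _), ← Real.rpow_mul hX.le]
    have hb : β ^ (p - 2) = p * Λ / 2 := by
      rw [hβ, ← Real.rpow_mul hq.le, one_div, inv_mul_cancel₀ hp2.ne', Real.rpow_one]
    have he2 : -2 / (p - 2) * (p - 2) = -2 := by field_simp
    rw [hb, he2, mul_assoc, ← h2', ← Real.rpow_add hX]
    norm_num
  -- scalar identities
  have hα2 : α ^ 2 = (p - 2) ^ 2 / 4 * Λ := by
    rw [hα]; rw [mul_pow, Real.sq_sqrt hΛpos.le]; ring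
  have h1 : α ^ 2 * k ^ 2 = (n : ℝ) - 1 + Λ := by
    rw [hα2, hk, hΛ, div_pow]
    have h4 : p ^ 2 - 4 = (p - 2) * (p + 2) := by ring
    field_simp
    ring
  have h2 : α ^ 2 * k * (k - 1) = (p - 1) * (p * Λ / 2) := by
    rw [hα2, hk]
    field_simp
    ring
  -- finish
  have hms : m s = c * (A * X ^ 2) := by simp only [hm']; rw [hA0]
  have hd2v : deriv (deriv m) s =
      c * k * α * (S * α * (k - 1) * A * S + A * X * (X * α)) := by
    rw [(hd2 s).deriv, hA2, hA1]
  rw [hd2v, hms]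
  linear_combination (-(c * A * k * α ^ 2 * (k - 1))) * hSX + (-(c * A * X ^ 2)) * h1 +
    (c * A) * h2 + (-((p - 1) * c * A)) * hVp
end

section
/- Let p > 2, Λ > 0, and define the Talenti bubbles V_t(s) := β·(cosh(α(s−t)))^{−2/(p−2)} with α := ((p−2)/2)·√Λ and β := (pΛ/2)^{1/(p−2)}. For every ε > 0 there exist constants c > 0 and C > 0, depending only on p, Λ and ε, such that for all t₁, t₂ ∈ ℝ and all q₁, q₂ ≥ 0 with q₁ + q₂ = p and |q₁ − q₂| ≥ ε one has c·e^{−√Λ·|t₁−t₂|·min{q₁,q₂}} ≤ ∫_ℝ V_{t₁}(s)^{q₁} V_{t₂}(s)^{q₂} ds ≤ C·e^{−√Λ·|t₁−t₂|·min{q₁,q₂}}. -/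
open MeasureTheory Real Set

private lemma exp_neg_abs_le_aux {a : ℝ} (ha : 0 < a) (s : ℝ) :
    Real.exp (-(a * |s|)) ≤ (min 1 ((a / 2) ^ 2))⁻¹ * (1 + s ^ 2)⁻¹ := by
  have hm : 0 < min 1 ((a / 2) ^ 2) := lt_min one_pos (by positivity)
  have h1 : (1 + a * |s| / 2) ^ 2 ≤ Real.exp (a * |s|) := by
    have h2 : a * |s| / 2 + 1 ≤ Real.exp (a * |s| / 2) := Real.add_one_le_exp _
    have h0 : (0:ℝ) ≤ 1 + a * |s| / 2 := by positivity
    have h3 : (1 + a * |s| / 2) ^ 2 ≤ Real.exp (a * |s| / 2) ^ 2 := by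
      apply pow_le_pow_left₀ h0 (by linarith)
    have h4 : Real.exp (a * |s| / 2) ^ 2 = Real.exp (a * |s|) := by
      rw [sq, ← Real.exp_add]; ring_nf
    linarith
  have h5 : min 1 ((a / 2) ^ 2) * (1 + s ^ 2) ≤ Real.exp (a * |s|) := by
    have hm1 : min 1 ((a / 2) ^ 2) ≤ 1 := min_le_left _ _
    have hm2 : min 1 ((a / 2) ^ 2) ≤ (a / 2) ^ 2 := min_le_right _ _
    have hsq : |s| ^ 2 = s ^ 2 := sq_abs s
    nlinarith [abs_nonneg s, mul_nonneg ha.le (abs_nonneg s), sq_nonneg s]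
  rw [Real.exp_neg]
  rw [← mul_inv]
  apply inv_anti₀ (by positivity) h5

private lemma integrable_exp_neg_mul_abs {a : ℝ} (ha : 0 < a) :
    Integrable (fun s : ℝ => Real.exp (-(a * |s|))) := by
  have hcont : Continuous fun s : ℝ => Real.exp (-(a * |s|)) := by continuity
  refine (integrable_inv_one_add_sq.const_mul ((min 1 ((a / 2) ^ 2))⁻¹)).mono'
    hcont.aestronglyMeasurable ?_
  filter_upwards with s
  rw [Real.norm_eq_abs, abs_of_pos (Real.exp_pos _)]
  exact exp_neg_abs_le_aux ha s

private lemma integrable_exp_neg_mul_abs' {a : ℝ} (ha : 0 < a) (t : ℝ) :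
    Integrable (fun s : ℝ => Real.exp (-(a * |s - t|))) :=
  (integrable_exp_neg_mul_abs ha).comp_sub_right t

private lemma integral_exp_neg_mul_abs_pos {a : ℝ} (ha : 0 < a) :
    0 < ∫ s : ℝ, Real.exp (-(a * |s|)) := by
  rw [integral_pos_iff_support_of_nonneg (fun s => (Real.exp_pos _).le)
    (integrable_exp_neg_mul_abs ha)]
  have hs : Function.support (fun s : ℝ => Real.exp (-(a * |s|))) = Set.univ :=
    Set.eq_univ_of_forall fun s => Real.exp_ne_zero _
  rw [hs, Real.volume_univ]
  exact ENNReal.zero_lt_top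

private lemma integral_exp_neg_mul_abs_shift (a t : ℝ) :
    ∫ s : ℝ, Real.exp (-(a * |s - t|)) = ∫ s : ℝ, Real.exp (-(a * |s|)) :=
  integral_sub_right_eq_self (fun u : ℝ => Real.exp (-(a * |u|))) t

private lemma cosh_le_exp_abs (x : ℝ) : Real.cosh x ≤ Real.exp |x| := by
  have h1 : Real.exp x ≤ Real.exp |x| := Real.exp_le_exp.mpr (le_abs_self x)
  have h2 : Real.exp (-x) ≤ Real.exp |x| := Real.exp_le_exp.mpr (neg_le_abs x)
  rw [Real.cosh_eq]; linarith

private lemma exp_abs_le_two_cosh (x : ℝ) : Real.exp |x| ≤ 2 * Real.cosh x := by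
  rw [Real.cosh_eq]
  rcases abs_cases x with ⟨h, _⟩ | ⟨h, _⟩ <;> rw [h] <;>
    nlinarith [Real.exp_pos x, Real.exp_pos (-x)]

section Pointwise

variable {p Λ α β : ℝ} (hp : 2 < p) (hΛ : 0 < Λ)
  (hα : α = (p - 2) / 2 * Real.sqrt Λ) (hβpos : 0 < β)

include hp hΛ hα

private lemma exp_eq_aux {q : ℝ} (t s : ℝ) :
    (Real.exp |α * (s - t)|) ^ ((-2 / (p - 2) : ℝ) * q)
      = Real.exp (-(Real.sqrt Λ * q * |s - t|)) := by
  have hp2 : (0:ℝ) < p - 2 := by linarith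
  have hsΛ : 0 < Real.sqrt Λ := Real.sqrt_pos.mpr hΛ
  have hαpos : 0 < α := by rw [hα]; positivity
  rw [← Real.exp_mul]
  congr 1
  rw [abs_mul, abs_of_pos hαpos, hα]
  field_simp

include hβpos

private lemma Vpow_ge {q : ℝ} (hq : 0 ≤ q) (t s : ℝ) :
    β ^ q * Real.exp (-(Real.sqrt Λ * q * |s - t|))
      ≤ (β * Real.cosh (α * (s - t)) ^ (-2 / (p - 2) : ℝ)) ^ q := by
  have hp2 : (0:ℝ) < p - 2 := by linarith
  have hc : 0 < Real.cosh (α * (s - t)) := Real.cosh_pos _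
  have hz : (-2 / (p - 2) : ℝ) * q ≤ 0 := by
    apply mul_nonpos_of_nonpos_of_nonneg _ hq
    apply div_nonpos_of_nonpos_of_nonneg <;> linarith
  rw [Real.mul_rpow hβpos.le (Real.rpow_pos_of_pos hc _).le]
  apply mul_le_mul_of_nonneg_left _ (Real.rpow_nonneg hβpos.le q)
  rw [← Real.rpow_mul hc.le]
  calc Real.exp (-(Real.sqrt Λ * q * |s - t|))
      = (Real.exp |α * (s - t)|) ^ ((-2 / (p - 2) : ℝ) * q) :=
        (exp_eq_aux hp hΛ hα t s).symm
    _ ≤ Real.cosh (α * (s - t)) ^ ((-2 / (p - 2) : ℝ) * q) :=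
        Real.rpow_le_rpow_of_nonpos hc (cosh_le_exp_abs _) hz

private lemma Vpow_le {q : ℝ} (hq : 0 ≤ q) (t s : ℝ) :
    (β * Real.cosh (α * (s - t)) ^ (-2 / (p - 2) : ℝ)) ^ q
      ≤ β ^ q * 2 ^ (2 / (p - 2) * q) * Real.exp (-(Real.sqrt Λ * q * |s - t|)) := by
  have hp2 : (0:ℝ) < p - 2 := by linarith
  have hc : 0 < Real.cosh (α * (s - t)) := Real.cosh_pos _
  have hz : (-2 / (p - 2) : ℝ) * q ≤ 0 := by
    apply mul_nonpos_of_nonpos_of_nonneg _ hq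
    apply div_nonpos_of_nonpos_of_nonneg <;> linarith
  rw [Real.mul_rpow hβpos.le (Real.rpow_pos_of_pos hc _).le, mul_assoc]
  apply mul_le_mul_of_nonneg_left _ (Real.rpow_nonneg hβpos.le q)
  rw [← Real.rpow_mul hc.le]
  have h1 : (2 * Real.cosh (α * (s - t))) ^ ((-2 / (p - 2) : ℝ) * q)
      ≤ (Real.exp |α * (s - t)|) ^ ((-2 / (p - 2) : ℝ) * q) :=
    Real.rpow_le_rpow_of_nonpos (Real.exp_pos _) (exp_abs_le_two_cosh _) hz
  rw [Real.mul_rpow (by norm_num) hc.le] at h1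
  have h2 : Real.cosh (α * (s - t)) ^ ((-2 / (p - 2) : ℝ) * q)
      = (2:ℝ) ^ (-((-2 / (p - 2) : ℝ) * q)) *
        ((2:ℝ) ^ ((-2 / (p - 2) : ℝ) * q) * Real.cosh (α * (s - t)) ^ ((-2 / (p - 2) : ℝ) * q)) := by
    rw [← mul_assoc, ← Real.rpow_add two_pos]
    simp
  rw [h2]
  have h3 : (2:ℝ) ^ (-((-2 / (p - 2) : ℝ) * q)) = (2:ℝ) ^ (2 / (p - 2) * q) := by
    congr 1; ring
  rw [h3]
  calc (2:ℝ) ^ (2 / (p - 2) * q) *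
        ((2:ℝ) ^ ((-2 / (p - 2) : ℝ) * q) * Real.cosh (α * (s - t)) ^ ((-2 / (p - 2) : ℝ) * q))
      ≤ (2:ℝ) ^ (2 / (p - 2) * q) * (Real.exp |α * (s - t)|) ^ ((-2 / (p - 2) : ℝ) * q) :=
        mul_le_mul_of_nonneg_left h1 (Real.rpow_nonneg (by norm_num) _)
    _ = (2:ℝ) ^ (2 / (p - 2) * q) * Real.exp (-(Real.sqrt Λ * q * |s - t|)) := by
        rw [exp_eq_aux hp hΛ hα t s]

end Pointwise

private lemma core_lemma (p Λ α β : ℝ) (hp : 2 < p) (hΛ : 0 < Λ)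
    (hα : α = (p - 2) / 2 * Real.sqrt Λ) (hβpos : 0 < β) (V : ℝ → ℝ → ℝ)
    (hV : ∀ t s, V t s = β * Real.cosh (α * (s - t)) ^ (-2 / (p - 2) : ℝ))
    (ε t₁ t₂ q₁ q₂ : ℝ) (hε : 0 < ε) (hq2 : 0 ≤ q₂) (hle : q₂ ≤ q₁)
    (hsum : q₁ + q₂ = p) (hd : ε ≤ q₁ - q₂) :
    β ^ p * (∫ s : ℝ, Real.exp (-(p * Real.sqrt Λ * |s|)))
        * Real.exp (-(Real.sqrt Λ * |t₁ - t₂| * q₂))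
      ≤ (∫ s : ℝ, V t₁ s ^ q₁ * V t₂ s ^ q₂) ∧
    (∫ s : ℝ, V t₁ s ^ q₁ * V t₂ s ^ q₂)
      ≤ β ^ p * 2 ^ (2 / (p - 2) * p) * (∫ s : ℝ, Real.exp (-(ε * Real.sqrt Λ * |s|)))
        * Real.exp (-(Real.sqrt Λ * |t₁ - t₂| * q₂)) := by
  have hq1 : 0 ≤ q₁ := hq2.trans hle
  have hsΛ : 0 < Real.sqrt Λ := Real.sqrt_pos.mpr hΛ
  have hppos : (0:ℝ) < p := by linarith
  have hps : 0 < p * Real.sqrt Λ := by positivity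
  have hεs : 0 < ε * Real.sqrt Λ := by positivity
  have hVpos : ∀ t s, 0 < V t s := by
    intro t s
    rw [hV]
    have := Real.cosh_pos (α * (s - t))
    positivity
  have hβsplit : β ^ p = β ^ q₁ * β ^ q₂ := by
    rw [← hsum, Real.rpow_add hβpos]
  have h2split : (2:ℝ) ^ (2 / (p - 2) * p) = 2 ^ (2 / (p - 2) * q₁) * 2 ^ (2 / (p - 2) * q₂) := by
    rw [← Real.rpow_add two_pos]
    congr 1
    rw [← hsum]; ring
  -- pointwise lower bound
  have hlb : ∀ s, (β ^ p * Real.exp (-(Real.sqrt Λ * |t₁ - t₂| * q₂)))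
      * Real.exp (-(p * Real.sqrt Λ * |s - t₁|)) ≤ V t₁ s ^ q₁ * V t₂ s ^ q₂ := by
    intro s
    have h1 := Vpow_ge hp hΛ hα hβpos hq1 t₁ s
    have h2 := Vpow_ge hp hΛ hα hβpos hq2 t₂ s
    rw [← hV t₁ s] at h1
    rw [← hV t₂ s] at h2
    have hmul := mul_le_mul h1 h2 (by positivity) (Real.rpow_nonneg (hVpos t₁ s).le q₁)
    have hexp : Real.exp (-(Real.sqrt Λ * |t₁ - t₂| * q₂)) * Real.exp (-(p * Real.sqrt Λ * |s - t₁|))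
        ≤ Real.exp (-(Real.sqrt Λ * q₁ * |s - t₁|)) * Real.exp (-(Real.sqrt Λ * q₂ * |s - t₂|)) := by
      rw [← Real.exp_add, ← Real.exp_add]
      apply Real.exp_le_exp.mpr
      have htri : q₂ * |s - t₂| ≤ q₂ * (|s - t₁| + |t₁ - t₂|) :=
        mul_le_mul_of_nonneg_left (abs_sub_le s t₁ t₂) hq2
      have heq : p * Real.sqrt Λ * |s - t₁|
          = Real.sqrt Λ * q₁ * |s - t₁| + Real.sqrt Λ * q₂ * |s - t₁| := by
        rw [← hsum]; ring
      have htri2 := mul_le_mul_of_nonneg_left htri hsΛ.le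
      linarith [htri2, heq]
    calc (β ^ p * Real.exp (-(Real.sqrt Λ * |t₁ - t₂| * q₂)))
          * Real.exp (-(p * Real.sqrt Λ * |s - t₁|))
        = (β ^ q₁ * β ^ q₂) * (Real.exp (-(Real.sqrt Λ * |t₁ - t₂| * q₂))
            * Real.exp (-(p * Real.sqrt Λ * |s - t₁|))) := by rw [hβsplit]; ring
      _ ≤ (β ^ q₁ * β ^ q₂) * (Real.exp (-(Real.sqrt Λ * q₁ * |s - t₁|))
            * Real.exp (-(Real.sqrt Λ * q₂ * |s - t₂|))) :=
          mul_le_mul_of_nonneg_left hexp (by positivity)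
      _ = (β ^ q₁ * Real.exp (-(Real.sqrt Λ * q₁ * |s - t₁|)))
            * (β ^ q₂ * Real.exp (-(Real.sqrt Λ * q₂ * |s - t₂|))) := by ring
      _ ≤ V t₁ s ^ q₁ * V t₂ s ^ q₂ := hmul
  -- pointwise upper bound
  have hub : ∀ s, V t₁ s ^ q₁ * V t₂ s ^ q₂
      ≤ (β ^ p * 2 ^ (2 / (p - 2) * p) * Real.exp (-(Real.sqrt Λ * |t₁ - t₂| * q₂)))
        * Real.exp (-(ε * Real.sqrt Λ * |s - t₁|)) := by
    intro s
    have h1 := Vpow_le hp hΛ hα hβpos hq1 t₁ s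
    have h2 := Vpow_le hp hΛ hα hβpos hq2 t₂ s
    rw [← hV t₁ s] at h1
    rw [← hV t₂ s] at h2
    have hmul := mul_le_mul h1 h2 (Real.rpow_nonneg (hVpos t₂ s).le q₂) (by positivity)
    have hexp : Real.exp (-(Real.sqrt Λ * q₁ * |s - t₁|)) * Real.exp (-(Real.sqrt Λ * q₂ * |s - t₂|))
        ≤ Real.exp (-(Real.sqrt Λ * |t₁ - t₂| * q₂)) * Real.exp (-(ε * Real.sqrt Λ * |s - t₁|)) := by
      rw [← Real.exp_add, ← Real.exp_add]
      apply Real.exp_le_exp.mpr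
      have htri : q₂ * |t₁ - t₂| ≤ q₂ * (|s - t₁| + |s - t₂|) := by
        apply mul_le_mul_of_nonneg_left _ hq2
        calc |t₁ - t₂| ≤ |t₁ - s| + |s - t₂| := abs_sub_le t₁ s t₂
          _ = |s - t₁| + |s - t₂| := by rw [abs_sub_comm t₁ s]
      have hε2 : ε * |s - t₁| ≤ (q₁ - q₂) * |s - t₁| :=
        mul_le_mul_of_nonneg_right hd (abs_nonneg (s - t₁))
      nlinarith [mul_le_mul_of_nonneg_left htri hsΛ.le,
        mul_le_mul_of_nonneg_left hε2 hsΛ.le]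
    calc V t₁ s ^ q₁ * V t₂ s ^ q₂
        ≤ (β ^ q₁ * 2 ^ (2 / (p - 2) * q₁) * Real.exp (-(Real.sqrt Λ * q₁ * |s - t₁|)))
            * (β ^ q₂ * 2 ^ (2 / (p - 2) * q₂) * Real.exp (-(Real.sqrt Λ * q₂ * |s - t₂|))) := hmul
      _ = (β ^ q₁ * β ^ q₂) * (2 ^ (2 / (p - 2) * q₁) * 2 ^ (2 / (p - 2) * q₂))
            * (Real.exp (-(Real.sqrt Λ * q₁ * |s - t₁|)) * Real.exp (-(Real.sqrt Λ * q₂ * |s - t₂|))) := by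
          ring
      _ ≤ (β ^ q₁ * β ^ q₂) * (2 ^ (2 / (p - 2) * q₁) * 2 ^ (2 / (p - 2) * q₂))
            * (Real.exp (-(Real.sqrt Λ * |t₁ - t₂| * q₂)) * Real.exp (-(ε * Real.sqrt Λ * |s - t₁|))) := by
          apply mul_le_mul_of_nonneg_left hexp
          positivity
      _ = (β ^ p * 2 ^ (2 / (p - 2) * p) * Real.exp (-(Real.sqrt Λ * |t₁ - t₂| * q₂)))
            * Real.exp (-(ε * Real.sqrt Λ * |s - t₁|)) := by
          rw [hβsplit, h2split]; ring
  -- integrability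
  have hIL : Integrable (fun s : ℝ => (β ^ p * Real.exp (-(Real.sqrt Λ * |t₁ - t₂| * q₂)))
      * Real.exp (-(p * Real.sqrt Λ * |s - t₁|))) :=
    (integrable_exp_neg_mul_abs' hps t₁).const_mul _
  have hIU : Integrable (fun s : ℝ =>
      (β ^ p * 2 ^ (2 / (p - 2) * p) * Real.exp (-(Real.sqrt Λ * |t₁ - t₂| * q₂)))
      * Real.exp (-(ε * Real.sqrt Λ * |s - t₁|))) :=
    (integrable_exp_neg_mul_abs' hεs t₁).const_mul _
  have hVc : ∀ t, Continuous (V t) := by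
    intro t
    have he : V t = fun s => β * Real.cosh (α * (s - t)) ^ (-2 / (p - 2) : ℝ) := funext (hV t)
    rw [he]
    apply continuous_const.mul
    apply Continuous.rpow_const
    · exact Real.continuous_cosh.comp (by continuity)
    · exact fun s => Or.inl (Real.cosh_pos _).ne'
  have hfc : Continuous fun s => V t₁ s ^ q₁ * V t₂ s ^ q₂ :=
    ((hVc t₁).rpow_const fun s => Or.inl (hVpos t₁ s).ne').mul
      ((hVc t₂).rpow_const fun s => Or.inl (hVpos t₂ s).ne')
  have hfint : Integrable (fun s => V t₁ s ^ q₁ * V t₂ s ^ q₂) := by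
    apply hIU.mono' hfc.aestronglyMeasurable
    filter_upwards with s
    have hfs : 0 < V t₁ s ^ q₁ * V t₂ s ^ q₂ :=
      mul_pos (Real.rpow_pos_of_pos (hVpos t₁ s) _) (Real.rpow_pos_of_pos (hVpos t₂ s) _)
    rw [Real.norm_eq_abs, abs_of_pos hfs]
    exact hub s
  constructor
  · calc β ^ p * (∫ s : ℝ, Real.exp (-(p * Real.sqrt Λ * |s|)))
          * Real.exp (-(Real.sqrt Λ * |t₁ - t₂| * q₂))
        = (β ^ p * Real.exp (-(Real.sqrt Λ * |t₁ - t₂| * q₂)))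
            * ∫ s : ℝ, Real.exp (-(p * Real.sqrt Λ * |s - t₁|)) := by
          rw [integral_exp_neg_mul_abs_shift]; ring
      _ = ∫ s : ℝ, (β ^ p * Real.exp (-(Real.sqrt Λ * |t₁ - t₂| * q₂)))
            * Real.exp (-(p * Real.sqrt Λ * |s - t₁|)) := (integral_const_mul _ _).symm
      _ ≤ ∫ s : ℝ, V t₁ s ^ q₁ * V t₂ s ^ q₂ := integral_mono hIL hfint hlb
  · calc (∫ s : ℝ, V t₁ s ^ q₁ * V t₂ s ^ q₂)
        ≤ ∫ s : ℝ, (β ^ p * 2 ^ (2 / (p - 2) * p) * Real.exp (-(Real.sqrt Λ * |t₁ - t₂| * q₂)))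
            * Real.exp (-(ε * Real.sqrt Λ * |s - t₁|)) := integral_mono hfint hIU hub
      _ = (β ^ p * 2 ^ (2 / (p - 2) * p) * Real.exp (-(Real.sqrt Λ * |t₁ - t₂| * q₂)))
            * ∫ s : ℝ, Real.exp (-(ε * Real.sqrt Λ * |s - t₁|)) := integral_const_mul _ _
      _ = β ^ p * 2 ^ (2 / (p - 2) * p) * (∫ s : ℝ, Real.exp (-(ε * Real.sqrt Λ * |s|)))
            * Real.exp (-(Real.sqrt Λ * |t₁ - t₂| * q₂)) := by
          rw [integral_exp_neg_mul_abs_shift]; ring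

/-- Interaction integral estimate (first part of Lemma 2.5): for every `ε > 0`
there are constants `c, C > 0` such that for all `t₁, t₂` and all exponents
`q₁, q₂ ≥ 0` with `q₁ + q₂ = p` and `|q₁ - q₂| ≥ ε`,
`∫ V_{t₁}^{q₁} V_{t₂}^{q₂} ≈ e^{-√Λ |t₁-t₂| min{q₁,q₂}}`. -/
theorem stmt_7 (p Λ α β : ℝ) (hp : 2 < p) (hΛ : 0 < Λ)
    (hα : α = (p - 2) / 2 * Real.sqrt Λ) (hβ : β = (p * Λ / 2) ^ ((1 : ℝ) / (p - 2)))
    (V : ℝ → ℝ → ℝ)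
    (hV : ∀ t s, V t s = β * Real.cosh (α * (s - t)) ^ (-2 / (p - 2) : ℝ)) :
    ∀ ε : ℝ, 0 < ε → ∃ c C : ℝ, 0 < c ∧ 0 < C ∧
      ∀ t₁ t₂ q₁ q₂ : ℝ, 0 ≤ q₁ → 0 ≤ q₂ → q₁ + q₂ = p → ε ≤ |q₁ - q₂| →
        c * Real.exp (-Real.sqrt Λ * |t₁ - t₂| * min q₁ q₂)
          ≤ (∫ s : ℝ, V t₁ s ^ q₁ * V t₂ s ^ q₂) ∧
        (∫ s : ℝ, V t₁ s ^ q₁ * V t₂ s ^ q₂)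
          ≤ C * Real.exp (-Real.sqrt Λ * |t₁ - t₂| * min q₁ q₂) := by
  intro ε hε
  have hsΛ : 0 < Real.sqrt Λ := Real.sqrt_pos.mpr hΛ
  have hppos : (0:ℝ) < p := by linarith
  have hβpos : 0 < β := by
    rw [hβ]
    apply Real.rpow_pos_of_pos
    positivity
  refine ⟨β ^ p * ∫ s : ℝ, Real.exp (-(p * Real.sqrt Λ * |s|)),
    β ^ p * 2 ^ (2 / (p - 2) * p) * ∫ s : ℝ, Real.exp (-(ε * Real.sqrt Λ * |s|)), ?_, ?_, ?_⟩
  · exact mul_pos (Real.rpow_pos_of_pos hβpos p)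
      (integral_exp_neg_mul_abs_pos (by positivity))
  · exact mul_pos (mul_pos (Real.rpow_pos_of_pos hβpos p) (Real.rpow_pos_of_pos two_pos _))
      (integral_exp_neg_mul_abs_pos (by positivity))
  intro t₁ t₂ q₁ q₂ hq₁ hq₂ hsum hdiff
  rcases le_total q₂ q₁ with h | h
  · have hd : ε ≤ q₁ - q₂ := by rwa [abs_of_nonneg (by linarith)] at hdiff
    have hc := core_lemma p Λ α β hp hΛ hα hβpos V hV ε t₁ t₂ q₁ q₂ hε hq₂ h hsum hd
    have hmin : min q₁ q₂ = q₂ := min_eq_right h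
    rw [hmin, show -Real.sqrt Λ * |t₁ - t₂| * q₂ = -(Real.sqrt Λ * |t₁ - t₂| * q₂) by ring]
    exact hc
  · have hd : ε ≤ q₂ - q₁ := by rwa [abs_of_nonpos (by linarith), neg_sub] at hdiff
    have hsum' : q₂ + q₁ = p := by linarith
    have hc := core_lemma p Λ α β hp hΛ hα hβpos V hV ε t₂ t₁ q₂ q₁ hε hq₁ h hsum' hd
    have hmin : min q₁ q₂ = q₁ := min_eq_left h
    have hswap : (∫ s : ℝ, V t₁ s ^ q₁ * V t₂ s ^ q₂)
        = ∫ s : ℝ, V t₂ s ^ q₂ * V t₁ s ^ q₁ := by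
      congr 1; funext s; ring
    rw [hmin, hswap,
      show -Real.sqrt Λ * |t₁ - t₂| * q₁ = -(Real.sqrt Λ * |t₂ - t₁| * q₁) by
        rw [abs_sub_comm t₂ t₁]; ring]
    exact hc
end

section
/- Let p > 2, Λ > 0, and define the Talenti bubbles V_t(s) := β·(cosh(α(s−t)))^{−2/(p−2)} with α := ((p−2)/2)·√Λ and β := (pΛ/2)^{1/(p−2)}. There exist constants c > 0 and C > 0, depending only on p and Λ, such that for all t₁, t₂ ∈ ℝ one has c·(|t₁−t₂|+1)·e^{−(p√Λ/2)·|t₁−t₂|} ≤ ∫_ℝ V_{t₁}(s)^{p/2} V_{t₂}(s)^{p/2} ds ≤ C·(|t₁−t₂|+1)·e^{−(p√Λ/2)·|t₁−t₂|}. -/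
open MeasureTheory Real Set

/-!
Since `e^{|y|}/2 ≤ cosh y ≤ e^{|y|}`, each factor `V_t(s)^{p/2} = β^{p/2} cosh(α(s-t))^{-p/(p-2)}`
is comparable to `e^{-k|s-t|}` with `k = p√Λ/2`. The product of two such exponentials integrates
exactly: with `d = |t₁ - t₂|`, `∫ e^{-k(|s-t₁|+|s-t₂|)} ds = (d + 1/k) e^{-kd}`, the term `d e^{-kd}`
coming from the plateau between the two centres, and `d + 1/k` is comparable to `d + 1`.
-/

lemma Real.cosh_le_exp_abs (x : ℝ) : cosh x ≤ exp |x| := by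
  rw [← cosh_abs, cosh_eq]
  linarith [exp_le_exp.2 (neg_le_self (abs_nonneg x))]

lemma Real.exp_abs_le_two_mul_cosh (x : ℝ) : exp |x| ≤ 2 * cosh x := by
  rw [← cosh_abs, cosh_eq]
  linarith [exp_pos (-|x|)]

lemma Real.exp_neg_mul_abs_le_cosh_rpow_neg {γ : ℝ} (hγ : 0 ≤ γ) (x : ℝ) :
    exp (-γ * |x|) ≤ cosh x ^ (-γ) :=
  calc exp (-γ * |x|) = exp |x| ^ (-γ) := by rw [← exp_mul, mul_comm]
    _ ≤ cosh x ^ (-γ) :=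
      rpow_le_rpow_of_nonpos (cosh_pos x) (cosh_le_exp_abs x) (neg_nonpos.2 hγ)

lemma Real.cosh_rpow_neg_le {γ : ℝ} (hγ : 0 ≤ γ) (x : ℝ) :
    cosh x ^ (-γ) ≤ 2 ^ γ * exp (-γ * |x|) :=
  calc cosh x ^ (-γ) ≤ (exp |x| / 2) ^ (-γ) :=
        rpow_le_rpow_of_nonpos (by positivity) (by linarith [exp_abs_le_two_mul_cosh x])
          (neg_nonpos.2 hγ)
    _ = 2 ^ γ * exp (-γ * |x|) := by
        rw [div_rpow (exp_pos _).le zero_le_two, ← exp_mul, rpow_neg zero_le_two, div_inv_eq_mul,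
          mul_comm, mul_comm |x|]

theorem integral_exp_neg_mul_abs_sub_add_abs_sub {k a b : ℝ} (hk : 0 < k) (hab : a ≤ b) :
    Integrable (fun s => exp (-k * (|s - a| + |s - b|))) ∧
      ∫ s, exp (-k * (|s - a| + |s - b|)) = (b - a + 1 / k) * exp (-k * (b - a)) := by
  set E := fun s => exp (-k * (|s - a| + |s - b|)) with hE
  have hleft : EqOn E (fun s => exp (-k * (a + b)) * exp (2 * k * s)) (Iic a) := by
    intro s (hs : s ≤ a)
    simp only [hE, abs_of_nonpos (sub_nonpos.2 hs), abs_of_nonpos (sub_nonpos.2 (hs.trans hab)),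
      ← exp_add]
    ring_nf
  have hmid : EqOn E (fun _ => exp (-k * (b - a))) (Ioc a b) := by
    rintro s ⟨has, hsb⟩
    simp only [hE, abs_of_pos (sub_pos.2 has), abs_of_nonpos (sub_nonpos.2 hsb)]
    ring_nf
  have hright : EqOn E (fun s => exp (k * (a + b)) * exp (-(2 * k) * s)) (Ioi b) := by
    intro s (hs : b < s)
    simp only [hE, abs_of_pos (sub_pos.2 hs), abs_of_pos (sub_pos.2 (hab.trans_lt hs)), ← exp_add]
    ring_nf
  have h1 : IntegrableOn E (Iic a) :=
    IntegrableOn.congr_fun ((integrableOn_exp_mul_Iic (by positivity) a).const_mul _)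
      hleft.symm measurableSet_Iic
  have h2 : IntegrableOn E (Ioc a b) :=
    (integrableOn_const measure_Ioc_lt_top.ne).congr_fun hmid.symm measurableSet_Ioc
  have h3 : IntegrableOn E (Ioi b) :=
    IntegrableOn.congr_fun ((integrableOn_exp_mul_Ioi (by linarith) b).const_mul _)
      hright.symm measurableSet_Ioi
  have h23 : IntegrableOn E (Ioi a) := by
    rw [← Ioc_union_Ioi_eq_Ioi hab]
    exact h2.union h3
  refine ⟨by simpa only [integrableOn_univ, Iic_union_Ioi] using h1.union h23, ?_⟩
  rw [← intervalIntegral.integral_Iic_add_Ioi h1 h23, ← Ioc_union_Ioi_eq_Ioi hab,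
    setIntegral_union (Ioc_disjoint_Ioi le_rfl) measurableSet_Ioi h2 h3,
    setIntegral_congr_fun measurableSet_Iic hleft, setIntegral_congr_fun measurableSet_Ioc hmid,
    setIntegral_congr_fun measurableSet_Ioi hright, integral_const_mul, integral_const_mul,
    integral_exp_mul_Iic (by positivity), integral_exp_mul_Ioi (by linarith), setIntegral_const,
    Real.volume_real_Ioc_of_le hab, smul_eq_mul]
  have hL : exp (-k * (a + b)) * exp (2 * k * a) = exp (-k * (b - a)) := by
    rw [← exp_add]; ring_nf
  have hR : exp (k * (a + b)) * exp (-(2 * k) * b) = exp (-k * (b - a)) := by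
    rw [← exp_add]; ring_nf
  rw [mul_div_assoc', hL, neg_div_neg_eq, mul_div_assoc', hR]
  field_simp
  ring

section TranslateProduct

variable {f : ℝ → ℝ} {k A B : ℝ}

theorem integral_mul_comp_sub_bounds_of_exp_decay (hf : Measurable f) (hk : 0 < k) (hA : 0 ≤ A)
    (hlow : ∀ x, A * exp (-k * |x|) ≤ f x) (hup : ∀ x, f x ≤ B * exp (-k * |x|))
    {a b : ℝ} (hab : a ≤ b) :
    A ^ 2 * ((b - a + 1 / k) * exp (-k * (b - a))) ≤ ∫ s, f (s - a) * f (s - b) ∧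
      ∫ s, f (s - a) * f (s - b) ≤ B ^ 2 * ((b - a + 1 / k) * exp (-k * (b - a))) := by
  obtain ⟨hE, hEval⟩ := integral_exp_neg_mul_abs_sub_add_abs_sub hk hab
  have hexp : ∀ s, exp (-k * |s - a|) * exp (-k * |s - b|) = exp (-k * (|s - a| + |s - b|)) :=
    fun s => by rw [← exp_add, mul_add]
  have hf0 : ∀ x, 0 ≤ f x := fun x => (by positivity : 0 ≤ A * exp (-k * |x|)).trans (hlow x)
  have hlowE : ∀ s, A ^ 2 * exp (-k * (|s - a| + |s - b|)) ≤ f (s - a) * f (s - b) := fun s => by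
    rw [← hexp, sq, mul_mul_mul_comm]
    exact mul_le_mul (hlow _) (hlow _) (by positivity) (hf0 _)
  have hupE : ∀ s, f (s - a) * f (s - b) ≤ B ^ 2 * exp (-k * (|s - a| + |s - b|)) := fun s => by
    rw [← hexp, sq, mul_mul_mul_comm]
    exact mul_le_mul (hup _) (hup _) (hf0 _) ((hf0 _).trans (hup _))
  have hint : Integrable (fun s => f (s - a) * f (s - b)) :=
    (hE.const_mul (B ^ 2)).mono'
      ((hf.comp (measurable_sub_const a)).mul
        (hf.comp (measurable_sub_const b))).aestronglyMeasurable
      (ae_of_all _ fun s => by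
        rw [Real.norm_of_nonneg (mul_nonneg (hf0 _) (hf0 _))]
        exact hupE s)
  rw [← hEval, ← integral_const_mul, ← integral_const_mul]
  exact ⟨integral_mono (hE.const_mul _) hint hlowE, integral_mono hint (hE.const_mul _) hupE⟩

theorem exists_integral_mul_comp_sub_asymp_of_exp_decay (hf : Measurable f) (hk : 0 < k)
    (hA : 0 < A)
    (hlow : ∀ x, A * exp (-k * |x|) ≤ f x) (hup : ∀ x, f x ≤ B * exp (-k * |x|)) :
    ∃ c C : ℝ, 0 < c ∧ 0 < C ∧ ∀ a b : ℝ,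
      c * ((|a - b| + 1) * exp (-k * |a - b|)) ≤ ∫ s, f (s - a) * f (s - b) ∧
        ∫ s, f (s - a) * f (s - b) ≤ C * ((|a - b| + 1) * exp (-k * |a - b|)) := by
  have hB : 0 < B := hA.trans_le (by simpa using (hlow 0).trans (hup 0))
  refine ⟨A ^ 2 / (1 + k), B ^ 2 * (1 + k) / k, by positivity, by positivity, ?_⟩
  suffices key : ∀ a b, a ≤ b →
      A ^ 2 / (1 + k) * ((b - a + 1) * exp (-k * (b - a))) ≤ ∫ s, f (s - a) * f (s - b) ∧
        ∫ s, f (s - a) * f (s - b) ≤ B ^ 2 * (1 + k) / k * ((b - a + 1) * exp (-k * (b - a))) by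
    intro a b
    rcases le_total a b with hab | hba
    · rw [abs_sub_comm, abs_of_nonneg (sub_nonneg.2 hab)]
      exact key a b hab
    · simp_rw [abs_of_nonneg (sub_nonneg.2 hba), mul_comm (f (_ - a))]
      exact key b a hba
  intro a b hab
  obtain ⟨hlower, hupper⟩ := integral_mul_comp_sub_bounds_of_exp_decay hf hk hA.le hlow hup hab
  have hd : 0 ≤ b - a := sub_nonneg.2 hab
  have hlin : b - a + 1 ≤ (1 + k) * (b - a + 1 / k) := by
    have : (1 + k) * (b - a + 1 / k) = (b - a + 1) + (k * (b - a) + 1 / k) := by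
      field_simp; ring
    rw [this]
    have : 0 ≤ k * (b - a) + 1 / k := by positivity
    linarith
  have hlin' : b - a + 1 / k ≤ (1 + k) / k * (b - a + 1) := by
    rw [div_mul_eq_mul_div, le_div_iff₀ hk, add_mul, one_div_mul_cancel hk.ne']
    nlinarith
  constructor
  · calc A ^ 2 / (1 + k) * ((b - a + 1) * exp (-k * (b - a)))
        ≤ A ^ 2 / (1 + k) * ((1 + k) * (b - a + 1 / k) * exp (-k * (b - a))) := by gcongr
      _ = A ^ 2 * ((b - a + 1 / k) * exp (-k * (b - a))) := by field_simp
      _ ≤ _ := hlower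
  · calc ∫ s, f (s - a) * f (s - b) ≤ B ^ 2 * ((b - a + 1 / k) * exp (-k * (b - a))) := hupper
      _ ≤ B ^ 2 * ((1 + k) / k * (b - a + 1) * exp (-k * (b - a))) := by gcongr
      _ = B ^ 2 * (1 + k) / k * ((b - a + 1) * exp (-k * (b - a))) := by ring

end TranslateProduct

/-- Interaction integral estimate (second part of Lemma 2.5, balanced case):
there are constants `c, C > 0`, depending only on `p` and `Λ`, such that for all
`t₁, t₂`, `∫ V_{t₁}^{p/2} V_{t₂}^{p/2} ≈ (|t₁-t₂|+1) e^{-(p√Λ/2)|t₁-t₂|}`. -/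
theorem stmt_8 (p Λ α β : ℝ) (hp : 2 < p) (hΛ : 0 < Λ)
    (hα : α = (p - 2) / 2 * Real.sqrt Λ) (hβ : β = (p * Λ / 2) ^ ((1 : ℝ) / (p - 2)))
    (V : ℝ → ℝ → ℝ)
    (hV : ∀ t s, V t s = β * Real.cosh (α * (s - t)) ^ (-2 / (p - 2) : ℝ)) :
    ∃ c C : ℝ, 0 < c ∧ 0 < C ∧
      ∀ t₁ t₂ : ℝ,
        c * ((|t₁ - t₂| + 1) * Real.exp (-(p * Real.sqrt Λ / 2) * |t₁ - t₂|))
          ≤ (∫ s : ℝ, V t₁ s ^ (p / 2) * V t₂ s ^ (p / 2)) ∧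
        (∫ s : ℝ, V t₁ s ^ (p / 2) * V t₂ s ^ (p / 2))
          ≤ C * ((|t₁ - t₂| + 1) * Real.exp (-(p * Real.sqrt Λ / 2) * |t₁ - t₂|)) := by
  have hp2 : 0 < p - 2 := by linarith
  have hβ0 : 0 < β := hβ ▸ rpow_pos_of_pos (by positivity) _
  have hα0 : 0 ≤ α := hα ▸ by positivity
  set γ := p / (p - 2) with hγ
  have hγ0 : 0 ≤ γ := by positivity
  set f : ℝ → ℝ := fun x => β ^ (p / 2) * cosh (α * x) ^ (-γ)
  have hVf : ∀ t s, V t s ^ (p / 2) = f (s - t) := fun t s => by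
    rw [hV, mul_rpow hβ0.le (rpow_nonneg (cosh_pos _).le _), ← rpow_mul (cosh_pos _).le]
    congr 2
    rw [hγ]
    field_simp
  have hdecay : ∀ x, exp (-γ * |α * x|) = exp (-(p * √Λ / 2) * |x|) := fun x => by
    rw [abs_mul, abs_of_nonneg hα0, hα, hγ]
    field_simp
  obtain ⟨c, C, hc, hC, hbounds⟩ := exists_integral_mul_comp_sub_asymp_of_exp_decay (f := f)
    (k := p * √Λ / 2) (A := β ^ (p / 2)) (B := β ^ (p / 2) * 2 ^ γ) (by fun_prop) (by positivity)
    (by positivity)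
    (fun x => by
      rw [← hdecay]
      exact mul_le_mul_of_nonneg_left (exp_neg_mul_abs_le_cosh_rpow_neg hγ0 _) (by positivity))
    (fun x => by
      rw [← hdecay, mul_assoc]
      exact mul_le_mul_of_nonneg_left (cosh_rpow_neg_le hγ0 _) (by positivity))
  refine ⟨c, C, hc, hC, fun t₁ t₂ => ?_⟩
  simp_rw [hVf]
  exact hbounds t₁ t₂
end

section
/- Let p > 2, Λ > 0, and define the Talenti bubbles V_t(s) := β·(cosh(α(s−t)))^{−2/(p−2)} with α := ((p−2)/2)·√Λ and β := (pΛ/2)^{1/(p−2)}. Then for all t₁, t₂ ∈ ℝ with t₂ > t₁ one has ∫_ℝ V_{t₁}(s)^{p−1}·V_{t₂}'(s) ds > 0, for t₂ < t₁ the integral is negative, and for t₂ = t₁ the integral equals 0. -/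
/-!
Write `V t = U (· - t)` with `U` the bubble centred at `0`. Since `U` is even and positive,
`φ = U ^ (p - 1)` is even and `ψ = U'` is odd, so the integral depends only on `d = t₂ - t₁`
and is odd in `d`.
For `d > 0` the reflection `s ↦ d - s` shows that it is half the integral of
`φ s * ψ (s - d) - φ (s - d) * ψ s`, which is pointwise positive because
`ψ / φ = c * sinh (2 α x)` with `c < 0` is strictly decreasing.
-/

open MeasureTheory Real

theorem Function.Even.deriv_odd {f : ℝ → ℝ} (hf : f.Even) : (deriv f).Odd := by
  intro x
  have h := deriv_comp_neg (f := f) (x := -x)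
  rwa [funext hf, neg_neg] at h

section Interaction

variable {φ ψ : ℝ → ℝ}

theorem integral_mul_comp_sub_neg (hφ : φ.Even) (hψ : ψ.Odd) (d : ℝ) :
    ∫ s, φ s * ψ (s - -d) = -∫ s, φ s * ψ (s - d) := by
  rw [← integral_neg_eq_self, ← integral_neg]
  congr 1 with s
  rw [hφ, show -s - -d = -(s - d) by ring, hψ, mul_neg]

theorem integral_mul_comp_sub_pos (hφ_pos : ∀ x, 0 < φ x) (hφ : φ.Even) (hψ : ψ.Odd)
    (hanti : StrictAnti fun x => ψ x / φ x) {d : ℝ} (hd : 0 < d)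
    (hint : Integrable fun s => φ s * ψ (s - d)) :
    0 < ∫ s, φ s * ψ (s - d) := by
  have hreflect (s : ℝ) : φ (d - s) * ψ (d - s - d) = -(φ (s - d) * ψ s) := by
    rw [sub_sub_cancel_left, hψ, ← neg_sub, hφ, mul_neg]
  have hint_swap : Integrable fun s => φ (s - d) * ψ s := by
    simpa only [hreflect, neg_neg] using (hint.comp_sub_left d).fun_neg
  have hswap : ∫ s, φ s * ψ (s - d) = -∫ s, φ (s - d) * ψ s := by
    rw [← integral_sub_left_eq_self _ volume d, ← integral_neg]
    simp only [hreflect]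
  have hpos (s : ℝ) : 0 < φ s * ψ (s - d) - φ (s - d) * ψ s := by
    have h := hanti (sub_lt_self s hd)
    rw [div_lt_div_iff₀ (hφ_pos _) (hφ_pos _)] at h
    linarith
  have hsum : 0 < ∫ s, (φ s * ψ (s - d) - φ (s - d) * ψ s) := by
    rw [integral_pos_iff_support_of_nonneg (fun s => (hpos s).le) (hint.sub hint_swap),
      Function.support_eq_univ fun s => (hpos s).ne']
    simp
  rw [integral_sub hint hint_swap] at hsum
  linarith

theorem integral_comp_sub_mul_comp_sub_sign (hφ_pos : ∀ x, 0 < φ x) (hφ : φ.Even)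
    (hψ : ψ.Odd) (hanti : StrictAnti fun x => ψ x / φ x)
    (hint : ∀ d, Integrable fun s => φ s * ψ (s - d)) (t₁ t₂ : ℝ) :
    (t₁ < t₂ → 0 < ∫ s, φ (s - t₁) * ψ (s - t₂)) ∧
      (t₂ < t₁ → ∫ s, φ (s - t₁) * ψ (s - t₂) < 0) ∧
      (t₂ = t₁ → ∫ s, φ (s - t₁) * ψ (s - t₂) = 0) := by
  have hshift : ∫ s, φ (s - t₁) * ψ (s - t₂) = ∫ s, φ s * ψ (s - (t₂ - t₁)) := by
    rw [← integral_sub_right_eq_self (fun s => φ s * ψ (s - (t₂ - t₁))) t₁]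
    simp only [sub_sub_sub_cancel_right]
  rw [hshift]
  refine ⟨fun h => integral_mul_comp_sub_pos hφ_pos hφ hψ hanti (sub_pos.2 h) (hint _),
    fun h => ?_, fun h => ?_⟩
  · have hpos := integral_mul_comp_sub_pos hφ_pos hφ hψ hanti (sub_pos.2 h) (hint _)
    rw [← neg_sub, integral_mul_comp_sub_neg hφ hψ]
    linarith
  · have hodd := integral_mul_comp_sub_neg hφ hψ 0
    rw [neg_zero] at hodd
    rw [h, sub_self]
    linarith

end Interaction

/-- `V t = bubble α β r (· - t)` with `r = -2 / (p - 2)`. -/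
noncomputable def bubble (α β r x : ℝ) : ℝ := β * cosh (α * x) ^ r

theorem integrable_cosh_rpow {q : ℝ} (hq : q ≤ -2) : Integrable fun x => cosh x ^ q := by
  refine integrable_inv_one_add_sq.mono' (measurable_cosh.pow_const q).aestronglyMeasurable
    (Filter.Eventually.of_forall fun x => ?_)
  have hsq : 1 + x ^ 2 ≤ cosh x ^ 2 := by
    have h := self_le_sinh_iff.2 (abs_nonneg x)
    rw [← abs_sinh] at h
    nlinarith [cosh_sq' x, sq_abs x, sq_abs (sinh x), abs_nonneg x]
  rw [norm_of_nonneg (rpow_nonneg (cosh_pos x).le q)]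
  calc cosh x ^ q ≤ cosh x ^ (-2 : ℝ) := rpow_le_rpow_of_exponent_le (one_le_cosh x) hq
    _ = (cosh x ^ 2)⁻¹ := by rw [rpow_neg (cosh_pos x).le, rpow_two]
    _ ≤ (1 + x ^ 2)⁻¹ := inv_anti₀ (by positivity) hsq

section Bubble

variable {α β r : ℝ}

theorem bubble_pos (hβ : 0 < β) (x : ℝ) : 0 < bubble α β r x :=
  mul_pos hβ (rpow_pos_of_pos (cosh_pos _) r)

theorem bubble_even : (bubble α β r).Even := fun x => by
  rw [bubble, bubble, mul_neg, cosh_neg]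

theorem bubble_rpow (hβ : 0 ≤ β) (q x : ℝ) :
    bubble α β r x ^ q = β ^ q * cosh (α * x) ^ (r * q) := by
  rw [bubble, mul_rpow hβ (rpow_nonneg (cosh_pos _).le _), ← rpow_mul (cosh_pos _).le]

theorem hasDerivAt_bubble (x : ℝ) :
    HasDerivAt (bubble α β r) (β * r * α * (cosh (α * x) ^ (r - 1) * sinh (α * x))) x := by
  have h := (((hasDerivAt_id x).const_mul α).cosh.rpow_const
    (p := r) (Or.inl (cosh_pos _).ne')).const_mul β
  exact h.congr_deriv (by simp only [id_eq]; ring)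

theorem abs_deriv_bubble_le (hr : r ≤ 0) (x : ℝ) :
    |deriv (bubble α β r) x| ≤ |β * r * α| := by
  have hc := cosh_pos (α * x)
  have hsinh : |sinh (α * x)| ≤ cosh (α * x) := by
    rw [abs_sinh, ← cosh_abs (α * x)]; exact (sinh_lt_cosh _).le
  rw [(hasDerivAt_bubble x).deriv, abs_mul (β * r * α), abs_mul (cosh (α * x) ^ (r - 1)),
    abs_of_pos (rpow_pos_of_pos hc _)]
  refine mul_le_of_le_one_right (abs_nonneg _) ?_
  calc cosh (α * x) ^ (r - 1) * |sinh (α * x)| ≤ cosh (α * x) ^ (r - 1) * cosh (α * x) :=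
        mul_le_mul_of_nonneg_left hsinh (rpow_pos_of_pos hc _).le
    _ = cosh (α * x) ^ r := by rw [← rpow_add_one hc.ne', sub_add_cancel]
    _ ≤ 1 := rpow_le_one_of_one_le_of_nonpos (one_le_cosh _) hr

theorem integrable_bubble_rpow_mul_deriv (hα : α ≠ 0) (hβ : 0 ≤ β) (hr : r ≤ 0) {q : ℝ}
    (hrq : r * q ≤ -2) (d : ℝ) :
    Integrable fun s => bubble α β r s ^ q * deriv (bubble α β r) (s - d) := by
  have hφ : Integrable fun s => bubble α β r s ^ q := by
    simp only [bubble_rpow hβ]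
    exact ((integrable_cosh_rpow hrq).comp_mul_left' hα).const_mul _
  exact hφ.mul_bdd ((measurable_deriv _).comp (measurable_id.sub_const d)).aestronglyMeasurable
    (Filter.Eventually.of_forall fun s => abs_deriv_bubble_le hr (s - d))

theorem strictAnti_deriv_bubble_div_rpow (hα : 0 < α) (hβ : 0 < β) (hr : r < 0) {q : ℝ}
    (hrq : r * q = r - 2) :
    StrictAnti fun x => deriv (bubble α β r) x / bubble α β r x ^ q := by
  have hratio (x : ℝ) : deriv (bubble α β r) x / bubble α β r x ^ q
      = β * r * α / β ^ q / 2 * sinh (2 * (α * x)) := by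
    have hc := cosh_pos (α * x)
    rw [(hasDerivAt_bubble x).deriv, bubble_rpow hβ.le, hrq, sinh_two_mul,
      show r - 1 = r - 2 + 1 by ring, rpow_add_one hc.ne']
    field_simp
  have hc : β * r * α / β ^ q / 2 < 0 :=
    div_neg_of_neg_of_pos (div_neg_of_neg_of_pos
      (mul_neg_of_neg_of_pos (mul_neg_of_pos_of_neg hβ hr) hα) (rpow_pos_of_pos hβ q)) two_pos
  intro a b hab
  simp only [hratio]
  exact mul_lt_mul_of_neg_left (sinh_lt_sinh.2 (by nlinarith)) hc

end Bubble

/-- Sign property of the interaction integral `∫ V_{t₁}^{p-1} V_{t₂}'`: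
it is positive for `t₂ > t₁`, negative for `t₂ < t₁`, and zero for `t₂ = t₁`. -/
theorem stmt_10 (p Λ α β : ℝ) (hp : 2 < p) (hΛ : 0 < Λ)
    (hα : α = (p - 2) / 2 * Real.sqrt Λ) (hβ : β = (p * Λ / 2) ^ ((1 : ℝ) / (p - 2)))
    (V : ℝ → ℝ → ℝ)
    (hV : ∀ t s, V t s = β * Real.cosh (α * (s - t)) ^ (-2 / (p - 2) : ℝ)) :
    ∀ t₁ t₂ : ℝ,
      (t₁ < t₂ → 0 < ∫ s : ℝ, V t₁ s ^ (p - 1) * deriv (V t₂) s) ∧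
      (t₂ < t₁ → (∫ s : ℝ, V t₁ s ^ (p - 1) * deriv (V t₂) s) < 0) ∧
      (t₂ = t₁ → (∫ s : ℝ, V t₁ s ^ (p - 1) * deriv (V t₂) s) = 0) := by
  set r : ℝ := -2 / (p - 2)
  have hα₀ : 0 < α := hα ▸ mul_pos (by linarith) (sqrt_pos.2 hΛ)
  have hβ₀ : 0 < β := hβ ▸ rpow_pos_of_pos (by positivity) _
  have hr : r < 0 := div_neg_of_neg_of_pos (by norm_num) (by linarith)
  have hrq : r * (p - 1) = r - 2 := by
    have : p - 2 ≠ 0 := by linarith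
    simp only [r]
    field_simp
    ring
  have hV_shift (t : ℝ) : V t = fun s => bubble α β r (s - t) := funext (hV t)
  intro t₁ t₂
  simp only [hV_shift, deriv_comp_sub_const]
  exact integral_comp_sub_mul_comp_sub_sign (fun x => rpow_pos_of_pos (bubble_pos hβ₀ x) _)
    (fun x => congrArg (· ^ (p - 1)) (bubble_even x)) bubble_even.deriv_odd
    (strictAnti_deriv_bubble_div_rpow hα₀ hβ₀ hr hrq)
    (integrable_bubble_rpow_mul_deriv hα₀.ne' hβ₀.le hr.le (by linarith)) t₁ t₂
end

section
/- Let p > 2 and Λ > 0, and set α := ((p−2)/2)·√Λ, β := (pΛ/2)^{1/(p−2)} and V_0(s) := β·(cosh(αs))^{−2/(p−2)}. Then the function W(s) := V_0(s)^{p−1} satisfies the identity −W''(s) + Λ·W(s) − (p−1)·V_0(s)^{p−2}·W(s) = (2(p−1)(p−2)/p)·V_0(s)^{2p−3} − p(p−2)Λ·V_0(s)^{p−1} for all s ∈ ℝ. -/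
/-!
Every power `V₀ s ^ q` equals `β ^ q * cosh (α s) ^ (-2q/(p-2))`, so both sides are combinations of
`cosh (α s) ^ γ` and `cosh (α s) ^ (γ - 2)` with `γ = -2(p-1)/(p-2)`. Using `sinh² = cosh² - 1`, the
second derivative of `cosh (α s) ^ γ` is `γ α² (γ cosh^γ - (γ - 1) cosh^(γ-2))`; the choices
`β ^ (p-2) = pΛ/2` and `α² = (p-2)²Λ/4` then make the coefficients of the two powers agree.
-/

open Real

theorem hasDerivAt_cosh_mul_rpow (α γ t : ℝ) :
    HasDerivAt (fun u => cosh (α * u) ^ γ)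
      (γ * α * (cosh (α * t) ^ (γ - 1) * sinh (α * t))) t := by
  convert (((hasDerivAt_id' t).const_mul α).cosh).rpow_const (p := γ)
    (Or.inl (cosh_pos _).ne') using 1
  ring

theorem deriv_cosh_mul_rpow (α γ : ℝ) :
    deriv (fun u => cosh (α * u) ^ γ) =
      fun t => γ * α * (cosh (α * t) ^ (γ - 1) * sinh (α * t)) :=
  funext fun t => (hasDerivAt_cosh_mul_rpow α γ t).deriv

theorem deriv_deriv_cosh_mul_rpow (α γ t : ℝ) :
    deriv (deriv fun u => cosh (α * u) ^ γ) t =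
      γ * α ^ 2 * (γ * cosh (α * t) ^ γ - (γ - 1) * cosh (α * t) ^ (γ - 2)) := by
  have hsinh : HasDerivAt (fun u => sinh (α * u)) (α * cosh (α * t)) t := by
    convert ((hasDerivAt_id' t).const_mul α).sinh using 1
    ring
  rw [deriv_cosh_mul_rpow]
  refine (((hasDerivAt_cosh_mul_rpow α (γ - 1) t).mul hsinh).const_mul (γ * α)).deriv.trans ?_
  have hc : 0 < cosh (α * t) := cosh_pos _
  rw [show γ - 1 - 1 = γ - 2 by ring, rpow_sub_one hc.ne', rpow_sub hc, rpow_two]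
  field_simp
  rw [sinh_sq]
  ring

theorem mul_cosh_rpow_rpow {β : ℝ} (hβ : 0 ≤ β) (a q x : ℝ) :
    (β * cosh x ^ a) ^ q = β ^ q * cosh x ^ (a * q) := by
  rw [mul_rpow hβ (rpow_nonneg (cosh_pos x).le _), ← rpow_mul (cosh_pos x).le]

/-- The identity for `W = V₀^(p-1)`:
`-W'' + Λ W - (p-1) V₀^(p-2) W = (2(p-1)(p-2)/p) V₀^(2p-3) - p(p-2)Λ V₀^(p-1)`,
where `V₀(s) = β (cosh(αs))^(-2/(p-2))`, `α = ((p-2)/2)√Λ`, `β = (pΛ/2)^(1/(p-2))`. -/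
theorem stmt_11 (p Λ α β : ℝ) (hp : 2 < p) (hΛ : 0 < Λ)
    (hα : α = (p - 2) / 2 * Real.sqrt Λ) (hβ : β = (p * Λ / 2) ^ ((1 : ℝ) / (p - 2)))
    (V₀ W : ℝ → ℝ) (hV : ∀ s, V₀ s = β * Real.cosh (α * s) ^ (-2 / (p - 2) : ℝ))
    (hW : ∀ s, W s = V₀ s ^ (p - 1)) :
    ∀ s, -deriv (deriv W) s + Λ * W s - (p - 1) * V₀ s ^ (p - 2) * W s
      = 2 * (p - 1) * (p - 2) / p * V₀ s ^ (2 * p - 3) - p * (p - 2) * Λ * V₀ s ^ (p - 1) := by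
  intro s
  have hp2 : p - 2 ≠ 0 := by linarith
  have hβ0 : 0 < β := hβ ▸ rpow_pos_of_pos (by positivity) _
  have hβp : β ^ (p - 2) = p * Λ / 2 := by rw [hβ, one_div, rpow_inv_rpow (by positivity) hp2]
  have hα2 : α ^ 2 = (p - 2) ^ 2 / 4 * Λ := by
    rw [hα, mul_pow, sq_sqrt hΛ.le]; ring
  have hVpow : ∀ t q, V₀ t ^ q = β ^ q * cosh (α * t) ^ (-2 / (p - 2) * q) := fun t q => by
    rw [hV, mul_cosh_rpow_rpow hβ0.le]
  set γ := -2 / (p - 2) * (p - 1) with hγ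
  have hW' : W = fun t => β ^ (p - 1) * cosh (α * t) ^ γ := funext fun t => by rw [hW, hVpow]
  rw [hW', deriv_const_mul_field', deriv_const_mul_field']
  beta_reduce
  rw [deriv_deriv_cosh_mul_rpow]
  set c := cosh (α * s)
  have hc : 0 < c := cosh_pos _
  have hV1 : V₀ s ^ (p - 1) = β ^ (p - 1) * c ^ γ := hVpow s _
  have hV2 : V₀ s ^ (p - 2) = p * Λ / 2 * (c ^ 2)⁻¹ := by
    rw [hVpow, hβp, div_mul_cancel₀ _ hp2, rpow_neg hc.le, rpow_two]
  have hV3 : V₀ s ^ (2 * p - 3) = β ^ (p - 1) * (p * Λ / 2) * (c ^ γ / c ^ 2) := by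
    rw [hVpow, show 2 * p - 3 = (p - 1) + (p - 2) by ring, rpow_add hβ0, hβp,
      show -2 / (p - 2) * (p - 1 + (p - 2)) = γ - 2 by rw [hγ]; field_simp; ring,
      rpow_sub hc, rpow_two]
  rw [rpow_sub hc, rpow_two, hV1, hV2, hV3, hα2, hγ]
  field_simp
  ring
end
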